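/- Let p be an odd prime, let E : y² = x³ + Ax + B be an elliptic curve over F_p, let α ∈ F_p be a quadratic non-residue, and let E^t : y² = x³ + α⁻²Ax + α⁻³B be the quadratic twist of E. Then #E(F_p) + #E^t(F_p) = 2p + 2. -/

import Mathlib

/-- The short Weierstrass curve `y² = x³ + Ax + B` over a field `F`. -/
def shortWeierstrass (F : Type) [Field F] (A B : F) : WeierstrassCurve.Affine F :=
  { a₁ := 0, a₂ := 0, a₃ := 0, a₄ := A, a₆ := B }

/-!
Above each `x` the curve `y² = f x` has `1 + χ (f x)` points, `χ` the quadratic character, so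
`#E = q + 1 + ∑ χ (f x)`. The twist's cubic is `g x = α⁻³ f (α x)` and `χ α⁻³ = -1`, so after
substituting `x ↦ α x` the two character sums cancel.
-/

open WeierstrassCurve WeierstrassCurve.Affine

section

variable {F : Type} [Field F]

lemma shortWeierstrass_equation_iff (A B x y : F) :
    (shortWeierstrass F A B).Equation x y ↔ y ^ 2 = x ^ 3 + A * x + B := by
  simp [equation_iff, shortWeierstrass]

lemma shortWeierstrass_Δ (A B : F) :
    (shortWeierstrass F A B).Δ = -16 * (4 * A ^ 3 + 27 * B ^ 2) := by
  simp only [shortWeierstrass, WeierstrassCurve.Δ, b₂, b₄, b₆, b₈]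
  ring

lemma shortWeierstrass_twist_Δ {α : F} (hα : α ≠ 0) (A B : F) :
    (shortWeierstrass F ((α ^ 2)⁻¹ * A) ((α ^ 3)⁻¹ * B)).Δ
      = (α ^ 6)⁻¹ * (shortWeierstrass F A B).Δ := by
  rw [shortWeierstrass_Δ, shortWeierstrass_Δ]
  field_simp

lemma natCard_point_shortWeierstrass [Finite F] {A B : F}
    (hΔ : (shortWeierstrass F A B).Δ ≠ 0) :
    Nat.card (shortWeierstrass F A B).Point
      = Nat.card {P : F × F // P.2 ^ 2 = P.1 ^ 3 + A * P.1 + B} + 1 := by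
  have hpoints (P : F × F) :
      (shortWeierstrass F A B).Nonsingular P.1 P.2 ↔ P.2 ^ 2 = P.1 ^ 3 + A * P.1 + B := by
    rw [← equation_iff_nonsingular_of_Δ_ne_zero hΔ, shortWeierstrass_equation_iff]
  rw [Nat.card_congr
      ((nonsingularPointEquiv _).trans (Equiv.subtypeEquivRight hpoints).optionCongr),
    Finite.card_option]

lemma natCard_sq_eq [Fintype F] [DecidableEq F] (hF : ringChar F ≠ 2) (f : F → F) :
    (Nat.card {P : F × F // P.2 ^ 2 = f P.1} : ℤ)
      = Fintype.card F + ∑ x, quadraticChar F (f x) := by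
  rw [Nat.card_congr (Equiv.subtypeProdEquivSigmaSubtype fun x y => y ^ 2 = f x),
    Nat.card_eq_fintype_card, Fintype.card_sigma]
  push_cast
  have hsqrts (a : F) : (Fintype.card {b : F // b ^ 2 = a} : ℤ) = quadraticChar F a + 1 := by
    rw [← quadraticChar_card_sqrts hF, Set.toFinset_card]
    rfl
  simp only [hsqrts, Finset.sum_add_distrib, Finset.sum_const, Finset.card_univ, nsmul_eq_mul,
    mul_one]
  ring

lemma sum_quadraticChar_twist [Fintype F] [DecidableEq F] {α : F} (hα : ¬IsSquare α) (A B : F) :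
    ∑ x, quadraticChar F (x ^ 3 + (α ^ 2)⁻¹ * A * x + (α ^ 3)⁻¹ * B)
      = -∑ x, quadraticChar F (x ^ 3 + A * x + B) := by
  have hα0 : α ≠ 0 := by rintro rfl; exact hα ⟨0, by simp⟩
  have hχα : quadraticChar F α⁻¹ = -1 :=
    quadraticChar_neg_one_iff_not_isSquare.mpr (by rwa [isSquare_inv])
  have hscale (x : F) : x ^ 3 + (α ^ 2)⁻¹ * A * x + (α ^ 3)⁻¹ * B
      = α⁻¹ ^ 3 * ((α * x) ^ 3 + A * (α * x) + B) := by
    field_simp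
  simp only [hscale, map_mul, map_pow, hχα, Odd.neg_one_pow (by decide : Odd 3), neg_one_mul,
    Finset.sum_neg_distrib]
  exact congrArg Neg.neg
    (Fintype.sum_equiv (Equiv.mulLeft₀ α hα0) _ (fun x => quadraticChar F (x ^ 3 + A * x + B))
      fun _ => rfl)

lemma natCard_point_shortWeierstrass_eq [Fintype F] [DecidableEq F] (hF : ringChar F ≠ 2)
    {A B : F} (hΔ : (shortWeierstrass F A B).Δ ≠ 0) :
    (Nat.card (shortWeierstrass F A B).Point : ℤ)
      = Fintype.card F + 1 + ∑ x, quadraticChar F (x ^ 3 + A * x + B) := by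
  rw [natCard_point_shortWeierstrass hΔ, Nat.cast_succ,
    natCard_sq_eq hF fun x => x ^ 3 + A * x + B]
  ring

end

/-- For an odd prime `p`, an elliptic curve `E : y² = x³ + Ax + B` over `𝔽_p` and its quadratic
twist `Eᵗ : y² = x³ + α⁻²Ax + α⁻³B` by a quadratic non-residue `α`, one has
`#E(𝔽_p) + #Eᵗ(𝔽_p) = 2p + 2`. -/
theorem stmt_2 (p : ℕ) [Fact p.Prime] (hp : p ≠ 2) (A B α : ZMod p)
    (hα : ¬ IsSquare α)
    (hΔ : (shortWeierstrass (ZMod p) A B).Δ ≠ 0) :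
    Nat.card (shortWeierstrass (ZMod p) A B).Point +
      Nat.card (shortWeierstrass (ZMod p) ((α ^ 2)⁻¹ * A) ((α ^ 3)⁻¹ * B)).Point
      = 2 * p + 2 := by
  have hα0 : α ≠ 0 := by rintro rfl; exact hα ⟨0, by simp⟩
  have hchar : ringChar (ZMod p) ≠ 2 := by rwa [ZMod.ringChar_zmod_n]
  have hΔt : (shortWeierstrass (ZMod p) ((α ^ 2)⁻¹ * A) ((α ^ 3)⁻¹ * B)).Δ ≠ 0 := by
    rw [shortWeierstrass_twist_Δ hα0]
    exact mul_ne_zero (inv_ne_zero (pow_ne_zero 6 hα0)) hΔ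
  zify
  rw [natCard_point_shortWeierstrass_eq hchar hΔ, natCard_point_shortWeierstrass_eq hchar hΔt,
    sum_quadraticChar_twist hα, ZMod.card]
  ring
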